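/- arXiv:2601.05972 — 3 statements merged into one kernel-verified Lean document; each statement's English description precedes it below -/
import Mathlib

section
/- For every flat layout L, the layout squeeze(L) satisfies: (1) size(squeeze(L)) = size(L); (2) cosize(squeeze(L)) = cosize(L); (3) the layout functions agree, i.e. Φ_{squeeze(L)}(x) = Φ_L(x) for every x ∈ {0,…,size(L)−1}. -/
/-- A flat layout, represented as its list of modes `(sᵢ, dᵢ)`:
the first component of each mode is a shape entry, the second a stride entry. -/
abbrev FlatLayout := List (ℕ × ℕ)

namespace FlatLayout

/-- Validity of a flat layout: every shape entry is a positive integer. -/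
def Valid (L : FlatLayout) : Prop := ∀ p ∈ L, 0 < p.1

/-- The size of a flat layout: the product of its shape entries. -/
def size (L : FlatLayout) : ℕ := (L.map Prod.fst).prod

/-- The cosize of a flat layout: `1 + Σ (sᵢ - 1) * dᵢ`. -/
def cosize (L : FlatLayout) : ℕ := 1 + (L.map fun p => (p.1 - 1) * p.2).sum

/-- The rank of a flat layout: its number of modes. -/
def rank (L : FlatLayout) : ℕ := L.length

/-- The layout function `Φ_L`: `Φ_L(x) = Σ xᵢ·dᵢ` where
`xᵢ = ⌊x / (s₁⋯sᵢ₋₁)⌋ mod sᵢ`. -/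
def phi : FlatLayout → ℕ → ℕ
  | [], _ => 0
  | (s, d) :: rest, x => x % s * d + phi rest (x / s)

/-- `squeeze L` deletes every mode whose shape entry equals `1`. -/
def squeeze (L : FlatLayout) : FlatLayout := L.filter fun p => p.1 != 1

/-- `filterZeros L` deletes every mode whose stride entry equals `0`. -/
def filterZeros (L : FlatLayout) : FlatLayout := L.filter fun p => p.2 != 0

/-- The ordering on modes: `(s,d) ⪯ (s',d')` iff `d < d'`, or `d = d'` and `s ≤ s'`. -/
def ModeLE (p q : ℕ × ℕ) : Prop := p.2 < q.2 ∨ (p.2 = q.2 ∧ p.1 ≤ q.1)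

instance : DecidableRel ModeLE := fun p q => by unfold ModeLE; infer_instance

/-- A flat layout is sorted if its consecutive modes are `⪯`-increasing. -/
def Sorted (L : FlatLayout) : Prop := L.Chain' ModeLE

/-- `sortL L` stably sorts the modes of `L` with respect to `⪯`. -/
def sortL (L : FlatLayout) : FlatLayout := L.mergeSort fun p q => decide (ModeLE p q)

/-- A flat layout is coalesced if no shape entry equals `1` and
for consecutive modes, `sᵢ·dᵢ ≠ dᵢ₊₁`. -/
def Coalesced (L : FlatLayout) : Prop :=
  (∀ p ∈ L, p.1 ≠ 1) ∧ L.Chain' fun p q => p.1 * p.2 ≠ q.2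

/-- Combine adjacent modes `(s,d), (s',d')` with `d' = s·d` into `(s·s', d)`, repeatedly. -/
def coalAux : List (ℕ × ℕ) → List (ℕ × ℕ)
  | [] => []
  | p :: rest =>
    match coalAux rest with
    | [] => [p]
    | q :: rest' =>
        if p.1 * p.2 = q.2 then (p.1 * q.1, p.2) :: rest' else p :: q :: rest'

/-- Coalesce of a flat layout: squeeze, then repeatedly combine adjacent modes
`(s,d), (s',d')` with `d' = s·d` into `(s·s', d)`. -/
def coal (L : FlatLayout) : FlatLayout := coalAux (squeeze L)

/-- Compactness: the layout function takes values in `{0, …, cosize L - 1}` and induces a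
bijection `{0, …, size L - 1} → {0, …, cosize L - 1}`. -/
def Compact (L : FlatLayout) : Prop :=
  Set.BijOn (phi L) {x | x < size L} {y | y < cosize L}

/-- `B` is a complement of `A` (written `A ⊥ B`) if the concatenation `A ⋆ B` is compact. -/
def Perp (A B : FlatLayout) : Prop := Compact (A ++ B)

/-- `A` is complementable if, writing `sort(squeeze A) = (s₁,…,sₘ):(d₁,…,dₘ)`,
`sᵢ·dᵢ` divides `dᵢ₊₁` for all `1 ≤ i < m`. -/
def Complementable (A : FlatLayout) : Prop :=
  (sortL (squeeze A)).Chain' fun p q => p.1 * p.2 ∣ q.2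

/-- `B` is an `N`-complement of `A` if `B` is a complement of `A`
and `size A * size B = N`. -/
def IsNComplement (A B : FlatLayout) (N : ℕ) : Prop :=
  Perp A B ∧ size A * size B = N

/-- `A` is `N`-complementable if, writing `sort(squeeze A) = (s₁,…,sₘ):(d₁,…,dₘ)`,
`sᵢ·dᵢ ∣ dᵢ₊₁` for all `1 ≤ i < m`, and `sₘ·dₘ ∣ N`. -/
def NComplementable (A : FlatLayout) (N : ℕ) : Prop :=
  ((sortL (squeeze A)).Chain' fun p q => p.1 * p.2 ∣ q.2) ∧
  ∀ p, (sortL (squeeze A)).getLast? = some p → p.1 * p.2 ∣ N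

/-- Given `l = [(s₁,d₁),…,(sₘ,dₘ)]`, the layout
`C = (d₁, d₂/(s₁d₁), …, dₘ/(sₘ₋₁dₘ₋₁)) : (1, s₁d₁, …, sₘ₋₁dₘ₋₁)`. -/
def compModes (l : List (ℕ × ℕ)) : List (ℕ × ℕ) :=
  match l with
  | [] => []
  | (_, d₁) :: t =>
      (d₁, 1) :: (l.zip t).map fun pq => (pq.2.2 / (pq.1.1 * pq.1.2), pq.1.1 * pq.1.2)

/-- The complement `comp A = coal C` of a complementable flat layout `A`. -/
def comp (A : FlatLayout) : FlatLayout := coal (compModes (sortL (squeeze A)))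

/-- Given `l = [(s₁,d₁),…,(sₘ,dₘ)]` and `N`, the layout
`C = (d₁, d₂/(s₁d₁), …, dₘ/(sₘ₋₁dₘ₋₁), N/(sₘdₘ)) : (1, s₁d₁, …, sₘ₋₁dₘ₋₁, sₘdₘ)`. -/
def compNModes (l : List (ℕ × ℕ)) (N : ℕ) : List (ℕ × ℕ) :=
  match l.getLast? with
  | none => [(N, 1)]
  | some (sm, dm) => compModes l ++ [(N / (sm * dm), sm * dm)]

/-- The `N`-complement `comp(A, N) = coal C` of an `N`-complementable flat layout `A`. -/
def compN (A : FlatLayout) (N : ℕ) : FlatLayout :=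
  coal (compNModes (sortL (squeeze A)) N)

/-- `L` is tractable if, writing `sort L = (s₁,…,sₘ):(d₁,…,dₘ)`, for every `1 ≤ i < m`
either `dᵢ = 0` or `sᵢ·dᵢ` divides `dᵢ₊₁`. -/
def Tractable (L : FlatLayout) : Prop :=
  (sortL L).Chain' fun p q => p.2 = 0 ∨ p.1 * p.2 ∣ q.2

end FlatLayout

namespace FlatLayout

@[simp]
theorem squeeze_cons_one (d : ℕ) (L : FlatLayout) : squeeze ((1, d) :: L) = squeeze L := by
  simp [squeeze]

theorem squeeze_cons_of_ne_one {s : ℕ} (hs : s ≠ 1) (d : ℕ) (L : FlatLayout) :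
    squeeze ((s, d) :: L) = (s, d) :: squeeze L := by
  simp [squeeze, hs]

theorem size_squeeze (L : FlatLayout) : size (squeeze L) = size L := by
  induction L with
  | nil => rfl
  | cons p L ih =>
    obtain ⟨s, d⟩ := p
    rcases eq_or_ne s 1 with rfl | hs
    · simpa [size] using ih
    · simp_all [size, squeeze_cons_of_ne_one hs]

theorem cosize_squeeze (L : FlatLayout) : cosize (squeeze L) = cosize L := by
  induction L with
  | nil => rfl
  | cons p L ih =>
    obtain ⟨s, d⟩ := p
    rcases eq_or_ne s 1 with rfl | hs
    · simpa [cosize] using ih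
    · simp only [cosize, squeeze_cons_of_ne_one hs, List.map_cons, List.sum_cons] at ih ⊢
      omega

theorem phi_squeeze (L : FlatLayout) (x : ℕ) : phi (squeeze L) x = phi L x := by
  induction L generalizing x with
  | nil => rfl
  | cons p L ih =>
    obtain ⟨s, d⟩ := p
    rcases eq_or_ne s 1 with rfl | hs
    · simp only [squeeze_cons_one, phi, ih, Nat.mod_one, Nat.div_one, zero_mul, zero_add]
    · simp [squeeze_cons_of_ne_one hs, phi, ih]

end FlatLayout

open FlatLayout in
theorem squeeze_spec_general (L : FlatLayout) :
    size (squeeze L) = size L ∧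
    cosize (squeeze L) = cosize L ∧
    ∀ x < size L, phi (squeeze L) x = phi L x := by
  exact ⟨size_squeeze L, cosize_squeeze L, fun x _ => phi_squeeze L x⟩

open FlatLayout in
theorem squeeze_spec (L : FlatLayout) (hL : L.Valid) :
    size (squeeze L) = size L ∧
    cosize (squeeze L) = cosize L ∧
    ∀ x < size L, phi (squeeze L) x = phi L x :=
  squeeze_spec_general L
end

section
/- For flat layouts A and B, the following are equivalent: (1) A ⊥ B; (2) B ⊥ A; (3) A ⊥ squeeze(B); (4) A ⊥ coal(B); (5) A ⊥ sort(B). -/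
/-!
Compactness of `L` depends only on `size L`, `cosize L` and the function `phi L`. Squeezing
preserves all three, and so does coalescing: merging `(s, d), (s', s * d)` into `(s * s', d)` is
the mixed-radix identity `x % (s * s') = x % s + s * (x / s % s')`. Permuting the modes permutes
the mixed-radix digits of the argument, so it precomposes `phi` with a bijection of
`{x | x < size}` and keeps the cosize; this covers `B ⋆ A` and `sort B`. A compact layout has a
preimage of `0`, so its size and hence all its shape entries are positive.
-/

namespace FlatLayout

section Basic

@[simp] lemma size_cons (p : ℕ × ℕ) (l : FlatLayout) : size (p :: l) = p.1 * size l := rfl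

lemma cosize_pos (L : FlatLayout) : 0 < cosize L := by unfold cosize; omega

lemma cosize_cons (p : ℕ × ℕ) (l : FlatLayout) :
    cosize (p :: l) = (p.1 - 1) * p.2 + cosize l := by
  simp only [cosize, List.map_cons, List.sum_cons]; ring

@[simp] lemma phi_cons (s d : ℕ) (l : FlatLayout) (x : ℕ) :
    phi ((s, d) :: l) x = x % s * d + phi l (x / s) := rfl

lemma add_mul_mod_div {a i : ℕ} (hi : i < a) (j : ℕ) :
    (i + a * j) % a = i ∧ (i + a * j) / a = j := by
  have ha : 0 < a := by omega
  rw [Nat.add_mul_mod_self_left, Nat.mod_eq_of_lt hi, Nat.add_mul_div_left _ _ ha,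
    Nat.div_eq_of_lt hi, zero_add]
  exact ⟨rfl, rfl⟩

lemma phi_cons_add_mul {s i : ℕ} (hi : i < s) (d : ℕ) (l : FlatLayout) (j : ℕ) :
    phi ((s, d) :: l) (i + s * j) = i * d + phi l j := by
  rw [phi_cons, (add_mul_mod_div hi j).1, (add_mul_mod_div hi j).2]

lemma valid_iff_size_ne_zero {L : FlatLayout} : Valid L ↔ size L ≠ 0 := by
  simp only [Valid, size, ne_eq, List.prod_eq_zero_iff, List.mem_map, not_exists, not_and,
    Nat.pos_iff_ne_zero]

lemma Compact.valid {L : FlatLayout} (hc : Compact L) : Valid L := by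
  obtain ⟨x, hx, -⟩ := hc.surjOn (show 0 < cosize L from cosize_pos L)
  exact valid_iff_size_ne_zero.mpr (Nat.ne_zero_of_lt hx)

end Basic

section Equivalent

structure Equivalent (L L' : FlatLayout) : Prop where
  size_eq : size L = size L'
  cosize_eq : cosize L = cosize L'
  phi_eq : phi L = phi L'

lemma Equivalent.refl (L : FlatLayout) : Equivalent L L := ⟨rfl, rfl, rfl⟩

lemma Equivalent.symm {L L' : FlatLayout} (h : Equivalent L L') : Equivalent L' L :=
  ⟨h.size_eq.symm, h.cosize_eq.symm, h.phi_eq.symm⟩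

lemma Equivalent.trans {L₁ L₂ L₃ : FlatLayout} (h₁₂ : Equivalent L₁ L₂)
    (h₂₃ : Equivalent L₂ L₃) : Equivalent L₁ L₃ :=
  ⟨h₁₂.size_eq.trans h₂₃.size_eq, h₁₂.cosize_eq.trans h₂₃.cosize_eq,
    h₁₂.phi_eq.trans h₂₃.phi_eq⟩

lemma Equivalent.compact_iff {L L' : FlatLayout} (h : Equivalent L L') :
    Compact L ↔ Compact L' := by
  rw [Compact, Compact, h.size_eq, h.cosize_eq, h.phi_eq]

lemma Equivalent.cons {l l' : FlatLayout} (p : ℕ × ℕ) (h : Equivalent l l') :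
    Equivalent (p :: l) (p :: l') := by
  obtain ⟨s, d⟩ := p
  refine ⟨?_, ?_, ?_⟩
  · simp only [size_cons, h.size_eq]
  · simp only [cosize_cons, h.cosize_eq]
  · ext x; simp only [phi_cons, h.phi_eq]

lemma Equivalent.append_left {B B' : FlatLayout} (A : FlatLayout) (h : Equivalent B B') :
    Equivalent (A ++ B) (A ++ B') := by
  induction A with
  | nil => exact h
  | cons p A ih => exact ih.cons p

lemma equivalent_one_cons (d : ℕ) (l : FlatLayout) : Equivalent ((1, d) :: l) l :=
  ⟨by simp, by simp [cosize_cons], by ext x; simp [Nat.mod_one]⟩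

lemma equivalent_squeeze (L : FlatLayout) : Equivalent (squeeze L) L := by
  induction L with
  | nil => exact .refl []
  | cons p l ih =>
    by_cases hp : p.1 = 1
    · obtain ⟨s, d⟩ := p
      obtain rfl : s = 1 := hp
      have hsq : squeeze ((1, d) :: l) = squeeze l := by simp [squeeze]
      rw [hsq]
      exact ih.trans (equivalent_one_cons d l).symm
    · have hsq : squeeze (p :: l) = p :: squeeze l := by simp [squeeze, hp]
      rw [hsq]
      exact ih.cons p

lemma equivalent_merge {s' : ℕ} (hs' : 0 < s') (s d : ℕ) (l : FlatLayout) :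
    Equivalent ((s * s', d) :: l) ((s, d) :: (s', s * d) :: l) := by
  refine ⟨?_, ?_, ?_⟩
  · simp only [size_cons]; ring
  · simp only [cosize_cons]
    rcases Nat.eq_zero_or_pos s with rfl | hs
    · simp
    · have : 1 ≤ s * s' := Nat.one_le_iff_ne_zero.mpr (Nat.mul_pos hs hs').ne'
      zify [hs, hs', this]
      ring
  · ext x
    simp only [phi_cons, Nat.mod_mul, Nat.div_div_eq_div_mul]
    ring

lemma size_coalAux (L : FlatLayout) : size (coalAux L) = size L := by
  induction L with
  | nil => rfl
  | cons p l ih =>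
    rw [coalAux]
    split
    · next h => simp [← ih, h]
    · next q rest h =>
      rw [h, size_cons] at ih
      split
      · simp only [size_cons, ← ih]; ring
      · simp only [size_cons, ← ih]

lemma valid_coalAux {L : FlatLayout} (hL : Valid L) : Valid (coalAux L) :=
  valid_iff_size_ne_zero.mpr (size_coalAux L ▸ valid_iff_size_ne_zero.mp hL)

lemma equivalent_coalAux_cons {l : FlatLayout} (hl : Valid l) (p : ℕ × ℕ) :
    Equivalent (coalAux (p :: l)) (p :: coalAux l) := by
  rw [coalAux]
  split
  · next h => rw [h]; exact .refl _
  · next q rest h =>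
    split
    · next hmerge =>
      rw [h]
      obtain ⟨s, d⟩ := p
      obtain ⟨s', d'⟩ := q
      obtain rfl : s * d = d' := hmerge
      exact equivalent_merge (valid_coalAux hl _ (h ▸ List.mem_cons_self)) s d rest
    · rw [h]; exact .refl _

lemma equivalent_coalAux {L : FlatLayout} (hL : Valid L) : Equivalent (coalAux L) L := by
  induction L with
  | nil => exact .refl []
  | cons p l ih =>
    have hl : Valid l := fun q hq => hL q (List.mem_cons_of_mem p hq)
    exact (equivalent_coalAux_cons hl p).trans ((ih hl).cons p)

lemma equivalent_coal {L : FlatLayout} (hL : Valid L) : Equivalent (coal L) L :=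
  (equivalent_coalAux fun p hp => hL p (List.mem_of_mem_filter hp)).trans (equivalent_squeeze L)

lemma valid_coal_iff {L : FlatLayout} : Valid (coal L) ↔ Valid L := by
  rw [valid_iff_size_ne_zero, valid_iff_size_ne_zero, coal, size_coalAux,
    (equivalent_squeeze L).size_eq]

end Equivalent

section Perm

lemma bijOn_mod_add_mul_comp_div {a m n : ℕ} (ha : 0 < a) {σ : ℕ → ℕ}
    (hσ : Set.BijOn σ {x | x < m} {x | x < n}) :
    Set.BijOn (fun x => x % a + a * σ (x / a)) {x | x < a * m} {x | x < a * n} := by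
  have hdiv {x k : ℕ} (hx : x < a * k) : x / a < k := Nat.div_lt_of_lt_mul hx
  refine ⟨fun x hx => Nat.add_mul_lt_mul_of_lt_of_lt (Nat.mod_lt x ha) (hσ.mapsTo (hdiv hx)),
    fun x hx y hy hxy => ?_, fun y hy => ?_⟩
  · simp only at hxy
    obtain ⟨hxm, hxd⟩ := add_mul_mod_div (Nat.mod_lt x ha) (σ (x / a))
    obtain ⟨hym, hyd⟩ := add_mul_mod_div (Nat.mod_lt y ha) (σ (y / a))
    have hmod : x % a = y % a := by rw [← hxm, hxy, hym]
    have hquot : σ (x / a) = σ (y / a) := by rw [← hxd, hxy, hyd]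
    rw [← Nat.mod_add_div x a, ← Nat.mod_add_div y a, hmod,
      hσ.injOn (hdiv hx) (hdiv hy) hquot]
  · obtain ⟨x', hx', hσx'⟩ := hσ.surjOn (hdiv hy)
    refine ⟨y % a + a * x', Nat.add_mul_lt_mul_of_lt_of_lt (Nat.mod_lt y ha) hx', ?_⟩
    obtain ⟨hmod, hquot⟩ := add_mul_mod_div (Nat.mod_lt y ha) x'
    simp only [hmod, hquot, hσx', Nat.mod_add_div]

lemma exists_eq_add_mul_add_mul {a b : ℕ} (ha : 0 < a) (hb : 0 < b) (x : ℕ) :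
    ∃ i < a, ∃ j < b, ∃ k, x = i + a * (j + b * k) :=
  ⟨x % a, Nat.mod_lt x ha, x / a % b, Nat.mod_lt _ hb, x / a / b, by
    rw [Nat.mod_add_div (x / a) b, Nat.mod_add_div]⟩

def swapDigits (a b x : ℕ) : ℕ := x / a % b + b * (x % a + a * (x / a / b))

lemma swapDigits_add_mul {a b i j : ℕ} (hi : i < a) (hj : j < b) (k : ℕ) :
    swapDigits a b (i + a * (j + b * k)) = j + b * (i + a * k) := by
  obtain ⟨hmod, hquot⟩ := add_mul_mod_div hi (j + b * k)
  obtain ⟨hmod', hquot'⟩ := add_mul_mod_div hj k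
  rw [swapDigits, hmod, hquot, hmod', hquot']

lemma swapDigits_swapDigits {a b : ℕ} (ha : 0 < a) (hb : 0 < b) (x : ℕ) :
    swapDigits b a (swapDigits a b x) = x := by
  obtain ⟨i, hi, j, hj, k, rfl⟩ := exists_eq_add_mul_add_mul ha hb x
  rw [swapDigits_add_mul hi hj, swapDigits_add_mul hj hi]

lemma swapDigits_lt {a b n x : ℕ} (ha : 0 < a) (hb : 0 < b) (hx : x < a * (b * n)) :
    swapDigits a b x < b * (a * n) := by
  obtain ⟨i, hi, j, hj, k, rfl⟩ := exists_eq_add_mul_add_mul ha hb x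
  have hk : k < n := by
    have := Nat.div_lt_of_lt_mul (Nat.div_lt_of_lt_mul hx)
    rwa [(add_mul_mod_div hi _).2, (add_mul_mod_div hj _).2] at this
  rw [swapDigits_add_mul hi hj]
  exact Nat.add_mul_lt_mul_of_lt_of_lt hj (Nat.add_mul_lt_mul_of_lt_of_lt hi hk)

lemma phi_swapDigits {a b : ℕ} (ha : 0 < a) (hb : 0 < b) (da db : ℕ) (l : FlatLayout) (x : ℕ) :
    phi ((b, db) :: (a, da) :: l) (swapDigits a b x) = phi ((a, da) :: (b, db) :: l) x := by
  obtain ⟨i, hi, j, hj, k, rfl⟩ := exists_eq_add_mul_add_mul ha hb x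
  rw [swapDigits_add_mul hi hj, phi_cons_add_mul hj, phi_cons_add_mul hi, phi_cons_add_mul hi,
    phi_cons_add_mul hj]
  ring

lemma exists_bijOn_phi_of_perm {L L' : FlatLayout} (h : L.Perm L') (hL : Valid L) :
    ∃ σ : ℕ → ℕ, Set.BijOn σ {x | x < size L'} {x | x < size L} ∧
      ∀ x, phi L' x = phi L (σ x) := by
  induction h with
  | nil => exact ⟨id, Set.bijOn_id _, fun _ => rfl⟩
  | cons p _ ih =>
    obtain ⟨σ, hσ, hphi⟩ := ih fun q hq => hL q (List.mem_cons_of_mem p hq)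
    obtain ⟨s, d⟩ := p
    have hs : 0 < s := hL _ List.mem_cons_self
    refine ⟨_, bijOn_mod_add_mul_comp_div hs hσ, fun x => ?_⟩
    rw [phi_cons_add_mul (Nat.mod_lt x hs), phi_cons, hphi]
  | swap p q l =>
    obtain ⟨a, da⟩ := p
    obtain ⟨b, db⟩ := q
    have hb : 0 < b := hL _ List.mem_cons_self
    have ha : 0 < a := hL _ (List.mem_cons_of_mem _ List.mem_cons_self)
    refine ⟨swapDigits a b, ?_, fun x => (phi_swapDigits ha hb da db l x).symm⟩
    exact Set.InvOn.bijOn ⟨fun x _ => swapDigits_swapDigits ha hb x,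
      fun x _ => swapDigits_swapDigits hb ha x⟩ (fun x hx => swapDigits_lt ha hb hx)
      (fun x hx => swapDigits_lt hb ha hx)
  | trans h₁₂ _ ih₁₂ ih₂₃ =>
    obtain ⟨σ₁, hσ₁, hphi₁⟩ := ih₁₂ hL
    obtain ⟨σ₂, hσ₂, hphi₂⟩ := ih₂₃ fun q hq => hL q (h₁₂.mem_iff.mpr hq)
    exact ⟨σ₁ ∘ σ₂, hσ₁.comp hσ₂, fun x => (hphi₂ x).trans (hphi₁ _)⟩

lemma cosize_eq_of_perm {L L' : FlatLayout} (h : L.Perm L') : cosize L = cosize L' := by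
  rw [cosize, cosize, (h.map _).sum_eq]

lemma Compact.of_perm {L L' : FlatLayout} (hc : Compact L) (h : L.Perm L') : Compact L' := by
  obtain ⟨σ, hσ, hphi⟩ := exists_bijOn_phi_of_perm h hc.valid
  rw [Compact, ← cosize_eq_of_perm h, funext hphi]
  exact hc.comp hσ

lemma compact_iff_of_perm {L L' : FlatLayout} (h : L.Perm L') : Compact L ↔ Compact L' :=
  ⟨fun hc => hc.of_perm h, fun hc => hc.of_perm h.symm⟩

end Perm

section Perp

lemma Perp.valid_right {A B : FlatLayout} (h : Perp A B) : Valid B :=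
  fun p hp => Compact.valid h p (List.mem_append_right A hp)

lemma perp_comm {A B : FlatLayout} : Perp A B ↔ Perp B A :=
  compact_iff_of_perm List.perm_append_comm

lemma perp_squeeze_iff {A B : FlatLayout} : Perp A (squeeze B) ↔ Perp A B :=
  ((equivalent_squeeze B).append_left A).compact_iff

lemma perp_coal_iff {A B : FlatLayout} : Perp A (coal B) ↔ Perp A B := by
  by_cases hB : Valid B
  · exact ((equivalent_coal hB).append_left A).compact_iff
  · exact iff_of_false (fun h => hB (valid_coal_iff.mp h.valid_right)) (fun h => hB h.valid_right)

lemma perp_sortL_iff {A B : FlatLayout} : Perp A (sortL B) ↔ Perp A B :=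
  compact_iff_of_perm ((List.mergeSort_perm B _).append_left A)

end Perp

end FlatLayout

open FlatLayout in
theorem perp_tfae_general (A B : FlatLayout) :
    [Perp A B, Perp B A, Perp A (squeeze B), Perp A (coal B), Perp A (sortL B)].TFAE := by
  tfae_have 1 ↔ 2 := perp_comm
  tfae_have 1 ↔ 3 := perp_squeeze_iff.symm
  tfae_have 1 ↔ 4 := perp_coal_iff.symm
  tfae_have 1 ↔ 5 := perp_sortL_iff.symm
  tfae_finish

open FlatLayout in
theorem perp_tfae (A B : FlatLayout) (hA : A.Valid) (hB : B.Valid) :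
    [Perp A B, Perp B A, Perp A (squeeze B), Perp A (coal B), Perp A (sortL B)].TFAE :=
  perp_tfae_general A B
end

section
/- If a flat layout A is complementable and sorted, then it's layout function Φ_A is monotone non-decreasing: for all x ≤ y in {0,…,size(A)−1}, Φ_A(x) ≤ Φ_A(y). -/
/-! If every mode satisfies `sᵢ·dᵢ ≤ dᵢ₊₁`, incrementing the coordinate vector of `x` by
one raises `Φ` by at least `d₁`: a carry out of mode `i` loses `(sᵢ - 1)·dᵢ < sᵢ·dᵢ ≤ dᵢ₊₁`
and gains `dᵢ₊₁`. Inducting on the first mode gives `Φ a + d₁·(b - a) ≤ Φ b` for `a ≤ b`.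
For a sorted layout, `squeeze A` is already sorted, so complementability is divisibility
`sᵢ·dᵢ ∣ dᵢ₊₁` along `squeeze A`; since also `dᵢ ≤ dᵢ₊₁`, a zero `dᵢ₊₁` forces `dᵢ = 0`,
and divisibility yields the inequality. -/

theorem List.IsChain.and {α : Type*} {R S : α → α → Prop} :
    ∀ {l : List α}, l.IsChain R → l.IsChain S → l.IsChain fun a b => R a b ∧ S a b
  | [], _, _ => .nil
  | [_], _, _ => .singleton _
  | _ :: _ :: _, hR, hS => by
    rw [List.isChain_cons_cons] at hR hS ⊢
    exact ⟨⟨hR.1, hS.1⟩, hR.2.and hS.2⟩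

theorem Nat.mod_add_sub_eq_mod_add_mul_sub_div {a b s : ℕ} (hab : a ≤ b) :
    a % s + (b - a) = b % s + s * (b / s - a / s) := by
  have := Nat.div_add_mod a s
  have := Nat.div_add_mod b s
  have := Nat.mul_le_mul_left s (Nat.div_le_div_right (c := s) hab)
  rw [Nat.mul_sub]
  omega

namespace FlatLayout

instance : IsTrans (ℕ × ℕ) ModeLE where
  trans _ _ _ := by unfold ModeLE; omega

theorem Sorted.squeeze {L : FlatLayout} (hL : Sorted L) : Sorted (squeeze L) :=
  List.IsChain.sublist hL List.filter_sublist

theorem sortL_eq_self {L : FlatLayout} (hL : Sorted L) : sortL L = L := by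
  refine List.mergeSort_of_pairwise ?_
  exact (List.isChain_iff_pairwise.mp hL).imp fun h => decide_eq_true h

theorem mul_le_of_dvd_of_modeLE {p q : ℕ × ℕ} (hdvd : p.1 * p.2 ∣ q.2) (hle : ModeLE p q) :
    p.1 * p.2 ≤ q.2 := by
  rcases Nat.eq_zero_or_pos p.2 with hp | hp
  · simp [hp]
  · exact Nat.le_of_dvd (by rcases hle with h | ⟨h, _⟩ <;> omega) hdvd

theorem phi_add_mul_le {L : FlatLayout} (hL : L.IsChain fun p q => p.1 * p.2 ≤ q.2)
    {a b : ℕ} (hab : a ≤ b) (hb : b < size L) :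
    phi L a + (L.headD (0, 0)).2 * (b - a) ≤ phi L b := by
  induction L generalizing a b with
  | nil =>
    simp only [size, List.map_nil, List.prod_nil, Nat.lt_one_iff] at hb
    simp [phi, show a = 0 by omega, hb]
  | cons p rest ih =>
    obtain ⟨s, d⟩ := p
    have hb' : b / s < size rest := by
      simp only [size, List.map_cons, List.prod_cons] at hb
      exact Nat.div_lt_of_lt_mul hb
    have hq : a / s ≤ b / s := Nat.div_le_div_right hab
    have hrest := ih hL.tail hq hb'
    have hstride : s * d * (b / s - a / s) ≤ (rest.headD (0, 0)).2 * (b / s - a / s) := by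
      cases rest with
      | nil => simp [Nat.lt_one_iff.mp hb']
      | cons q rest => exact Nat.mul_le_mul_right _ (List.isChain_cons_cons.mp hL).1
    calc phi ((s, d) :: rest) a + d * (b - a)
        = (a % s + (b - a)) * d + phi rest (a / s) := by simp only [phi]; ring
      _ = b % s * d + s * d * (b / s - a / s) + phi rest (a / s) := by
          rw [Nat.mod_add_sub_eq_mod_add_mul_sub_div hab]; ring
      _ ≤ phi ((s, d) :: rest) b := by simp only [phi]; omega

theorem phi_le_phi_of_isChain {L : FlatLayout} (hL : L.IsChain fun p q => p.1 * p.2 ≤ q.2)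
    {a b : ℕ} (hab : a ≤ b) (hb : b < size L) : phi L a ≤ phi L b :=
  (Nat.le_add_right _ _).trans (phi_add_mul_le hL hab hb)

end FlatLayout

open FlatLayout in
theorem phi_monotone_of_complementable_sorted_general (A : FlatLayout)
    (hc : Complementable A) (hs : Sorted A) :
    ∀ x y : ℕ, x ≤ y → y < size A → phi A x ≤ phi A y := by
  intro x y hxy hy
  have hsq : Sorted (squeeze A) := hs.squeeze
  rw [Complementable, sortL_eq_self hsq] at hc
  have hchain : (squeeze A).IsChain fun p q => p.1 * p.2 ≤ q.2 :=
    (hc.and hsq).imp fun _ _ h => mul_le_of_dvd_of_modeLE h.1 h.2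
  rw [← phi_squeeze A x, ← phi_squeeze A y]
  exact phi_le_phi_of_isChain hchain hxy (by rwa [size_squeeze])

open FlatLayout in
theorem phi_monotone_of_complementable_sorted (A : FlatLayout) (hA : A.Valid)
    (hc : Complementable A) (hs : Sorted A) :
    ∀ x y : ℕ, x ≤ y → y < size A → phi A x ≤ phi A y :=
  phi_monotone_of_complementable_sorted_general A hc hs
end
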